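/- Let X be a real Banach space, x₀ ∈ X, R > 0, and let A satisfy the variable Lipschitz condition on B[x₀,R] with a continuous nonnegative function k on [0,R]. Set a = ‖A x₀ − x₀‖, a₊(r) = a + ∫₀^r k(t) dt, assume a₊ has a fixed point in [0,R], let r* be its smallest fixed point in [0,R], and let x* be the fixed point of A with ‖x* − x₀‖ ≤ r* obtained as the limit of the successive approximations x_{n+1} = A x_n starting from x₀. Let r ∈ [r*, R] be such that a₊(s) < s for all s with r* < s ≤ r. Then x* is the unique fixed point of A in B[x₀,r]: every x̄ with A x̄ = x̄ and ‖x̄ − x₀‖ ≤ r equals x*. -/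

import Mathlib

/-! Integrating the variable Lipschitz condition along a segment gives
`‖A u - A v‖ ≤ ∫ t..t + ‖u - v‖, k` whenever `‖v - x₀‖ ≤ t`. For a fixed point `y` with
`‖y - x₀‖ ≤ r` this yields `‖y - x₀‖ ≤ a₊ ‖y - x₀‖`, which rules out `r* < ‖y - x₀‖ ≤ r`.
Once `y ∈ B[x₀, r*]`, the same estimate shows by induction that the successive approximations
satisfy `‖y - xₙ‖ ≤ r* - tₙ`, where `tₙ = a₊ⁿ 0`; these increase to the least fixed point `r*`
of `a₊`, so `xₙ → y` and hence `y = x*`. -/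

open Set Filter Topology intervalIntegral Function

section Iterate

variable {α : Type*} {f : α → α} {a p : α}

theorem MonotoneOn.iterate_mem_Icc [Preorder α] (hf : MonotoneOn f (Icc a p)) (ha : a ≤ f a)
    (hp : f p ≤ p) (hap : a ≤ p) (n : ℕ) : f^[n] a ∈ Icc a p :=
  (hf.mapsTo_Icc.mono_right (Icc_subset_Icc ha hp)).iterate n (left_mem_Icc.2 hap)

theorem MonotoneOn.monotone_iterate_apply [Preorder α] (hf : MonotoneOn f (Icc a p))
    (ha : a ≤ f a) (hp : f p ≤ p) (hap : a ≤ p) : Monotone fun n => f^[n] a := by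
  refine monotone_nat_of_le_succ fun n => ?_
  induction n with
  | zero => exact ha
  | succ n ih =>
    simpa only [iterate_succ_apply'] using
      hf (hf.iterate_mem_Icc ha hp hap n) (hf.iterate_mem_Icc ha hp hap (n + 1)) ih

theorem MonotoneOn.tendsto_iterate_least_fixedPt [ConditionallyCompleteLinearOrder α]
    [TopologicalSpace α] [OrderTopology α] (hf : MonotoneOn f (Icc a p))
    (hfc : ContinuousOn f (Icc a p)) (ha : a ≤ f a) (hp : f p = p) (hap : a ≤ p)
    (hleast : ∀ s ∈ Icc a p, f s = s → p ≤ s) : Tendsto (fun n => f^[n] a) atTop (𝓝 p) := by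
  have hmem := hf.iterate_mem_Icc ha hp.le hap
  have hbdd : BddAbove (range fun n => f^[n] a) := ⟨p, forall_mem_range.2 fun n => (hmem n).2⟩
  have hL := tendsto_atTop_ciSup (hf.monotone_iterate_apply ha hp.le hap) hbdd
  set L := ⨆ n, f^[n] a
  have hL_mem : L ∈ Icc a p := isClosed_Icc.mem_of_tendsto hL (Eventually.of_forall hmem)
  have hL_fix : f L = L := by
    refine tendsto_nhds_unique ?_ ((tendsto_add_atTop_iff_nat 1).2 hL)
    simp only [iterate_succ_apply']
    exact (hfc L hL_mem).tendsto.comp (tendsto_nhdsWithin_iff.2 ⟨hL, .of_forall hmem⟩)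
  rwa [le_antisymm hL_mem.2 (hleast L hL_mem hL_fix)] at hL

end Iterate

section Comparison

variable {E : Type*} [NormedAddCommGroup E] {g : ℝ → E} {φ : ℝ → ℝ} {a b : ℝ}

theorem ContinuousOn.hasDerivWithinAt_integral_Ici (hφ : ContinuousOn φ (Icc a b)) {c : ℝ}
    (hc : c ∈ Ico a b) : HasDerivWithinAt (fun u => ∫ s in a..u, φ s) (φ c) (Ici c) c :=
  integral_hasDerivWithinAt_right
    ((hφ.mono (Icc_subset_Icc_right hc.2.le)).intervalIntegrable_of_Icc hc.1)
    ((hφ.stronglyMeasurableAtFilter_nhdsWithin measurableSet_Icc c).filter_mono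
      (nhdsWithin_le_of_mem (Icc_mem_nhdsGT_of_mem hc)))
    ((hφ c (Ico_subset_Icc_self hc)).mono_of_mem_nhdsWithin (Icc_mem_nhdsGT_of_mem hc))

theorem continuousOn_Icc_of_norm_sub_le_mul (hφ : ContinuousOn φ (Icc a b))
    (hg : ∀ c z, a ≤ c → c < z → z ≤ b → ‖g z - g c‖ ≤ φ z * (z - c)) :
    ContinuousOn g (Icc a b) := by
  obtain ⟨M, hM⟩ := isCompact_Icc.exists_bound_of_continuousOn hφ
  refine (LipschitzOnWith.of_dist_le' (K := M) fun z hz c hc => ?_).continuousOn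
  wlog hcz : c ≤ z generalizing c z
  · rw [dist_comm, dist_comm z]
    exact this c hc z hz (le_of_not_ge hcz)
  rcases hcz.eq_or_lt with rfl | hcz
  · simp
  rw [dist_eq_norm, Real.dist_eq, abs_of_pos (sub_pos.2 hcz)]
  calc ‖g z - g c‖ ≤ φ z * (z - c) := hg c z hc.1 hcz hz.2
    _ ≤ M * (z - c) :=
      mul_le_mul_of_nonneg_right ((le_abs_self _).trans (hM z hz)) (sub_pos.2 hcz).le

theorem norm_sub_le_integral_of_norm_sub_le_mul (hab : a ≤ b) (hφ : ContinuousOn φ (Icc a b))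
    (hg : ∀ c z, a ≤ c → c < z → z ≤ b → ‖g z - g c‖ ≤ φ z * (z - c)) :
    ‖g b - g a‖ ≤ ∫ s in a..b, φ s := by
  have hprimitive_cont : ContinuousOn (fun u => ∫ s in a..u, φ s) (Icc a b) := by
    rw [← uIcc_of_le hab] at hφ ⊢
    exact continuousOn_primitive_interval hφ.integrableOn_uIcc
  refine image_le_of_liminf_slope_right_le_deriv_boundary (f := fun c => ‖g c - g a‖)
    ((continuousOn_Icc_of_norm_sub_le_mul hφ hg).sub continuousOn_const).norm (by simp)
    hprimitive_cont (fun c hc => hφ.hasDerivWithinAt_integral_Ici hc) ?_ (right_mem_Icc.2 hab)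
  intro c hc ρ hρ
  have hφ_right : ContinuousWithinAt φ (Ioi c) c :=
    (hφ c (Ico_subset_Icc_self hc)).mono_of_mem_nhdsWithin (Icc_mem_nhdsGT_of_mem hc)
  refine Eventually.frequently ?_
  filter_upwards [hφ_right.eventually (gt_mem_nhds hρ), self_mem_nhdsWithin,
    Icc_mem_nhdsGT_of_mem hc] with z hφz hcz hz
  have hcz : 0 < z - c := sub_pos.2 hcz
  rw [slope_def_field, div_lt_iff₀ hcz]
  calc ‖g z - g a‖ - ‖g c - g a‖ ≤ ‖g z - g c‖ := by
        simpa using norm_sub_norm_le (g z - g a) (g c - g a)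
    _ ≤ φ z * (z - c) := hg c z hc.1 (sub_pos.1 hcz) hz.2
    _ < ρ * (z - c) := mul_lt_mul_of_pos_right hφz hcz

end Comparison

section Majorant

noncomputable def majorant (a : ℝ) (k : ℝ → ℝ) (r : ℝ) : ℝ :=
  a + ∫ t in (0 : ℝ)..r, k t

variable {R a : ℝ} {k : ℝ → ℝ}

@[simp]
theorem majorant_zero : majorant a k 0 = a := by
  simp [majorant]

theorem majorant_sub_majorant (hk : ContinuousOn k (Icc 0 R)) {s r : ℝ} (hs : s ∈ Icc 0 R)
    (hr : r ∈ Icc 0 R) : majorant a k r - majorant a k s = ∫ t in s..r, k t := by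
  rw [majorant, majorant, add_sub_add_left_eq_sub]
  exact integral_interval_sub_left
    ((hk.mono (Icc_subset_Icc_right hr.2)).intervalIntegrable_of_Icc hr.1)
    ((hk.mono (Icc_subset_Icc_right hs.2)).intervalIntegrable_of_Icc hs.1)

theorem monotoneOn_majorant (hk : ContinuousOn k (Icc 0 R)) (hk₀ : ∀ t ∈ Icc 0 R, 0 ≤ k t) :
    MonotoneOn (majorant a k) (Icc 0 R) := fun s hs r hr hsr => by
  have hdiff := majorant_sub_majorant (a := a) hk hs hr
  have hint : 0 ≤ ∫ t in s..r, k t :=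
    integral_nonneg hsr fun t ht => hk₀ t ⟨hs.1.trans ht.1, ht.2.trans hr.2⟩
  linarith

theorem continuousOn_majorant (hk : ContinuousOn k (Icc 0 R)) :
    ContinuousOn (majorant a k) (Icc 0 R) := by
  rcases le_or_gt 0 R with hR | hR
  · rw [← uIcc_of_le hR] at hk ⊢
    exact continuousOn_const.add (continuousOn_primitive_interval hk.integrableOn_uIcc)
  · simp [Icc_eq_empty_of_lt hR]

end Majorant

section VariableLipschitz

variable {X Y : Type*} [NormedAddCommGroup X] [NormedAddCommGroup Y]

def VariableLipschitzOn (A : X → Y) (x₀ : X) (R : ℝ) (k : ℝ → ℝ) : Prop :=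
  ∀ x₁ x₂ : X, ∀ r : ℝ, ‖x₁ - x₀‖ ≤ r → ‖x₂ - x₀‖ ≤ r → 0 < r → r ≤ R →
    ‖A x₁ - A x₂‖ ≤ k r * ‖x₁ - x₂‖

variable [NormedSpace ℝ X] {A : X → Y} {x₀ : X} {R : ℝ} {k : ℝ → ℝ}

namespace VariableLipschitzOn

theorem norm_sub_le_integral (hA : VariableLipschitzOn A x₀ R k) (hk : ContinuousOn k (Icc 0 R))
    {u v : X} {t : ℝ} (ht : 0 ≤ t) (hv : ‖v - x₀‖ ≤ t) (htR : t + ‖u - v‖ ≤ R) :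
    ‖A u - A v‖ ≤ ∫ s in t..t + ‖u - v‖, k s := by
  obtain huv | hδ := (norm_nonneg (u - v)).eq_or_lt
  · obtain rfl : u = v := norm_sub_eq_zero_iff.1 huv.symm
    simp
  set δ := ‖u - v‖
  let p : ℝ → X := fun s => AffineMap.lineMap v u ((s - t) / δ)
  have hp_dist : ∀ c z, dist (p z) (p c) = |z - c| := fun c z => by
    rw [dist_lineMap_lineMap, dist_comm v u, dist_eq_norm u v, Real.dist_eq, ← sub_div,
      sub_sub_sub_cancel_right, abs_div, abs_of_pos hδ, div_mul_cancel₀ _ hδ.ne']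
  have hp_start : p t = v := by simp [p]
  have hp_end : p (t + δ) = u := by simp [p, hδ.ne']
  have hp_norm : ∀ s, t ≤ s → ‖p s - x₀‖ ≤ s := fun s hs => by
    rw [← dist_eq_norm]
    calc dist (p s) x₀ ≤ dist (p s) (p t) + dist (p t) x₀ := dist_triangle _ _ _
      _ ≤ s := by
        rw [hp_dist, hp_start, dist_eq_norm, abs_of_nonneg (sub_nonneg.2 hs)]
        linarith
  have hbound := norm_sub_le_integral_of_norm_sub_le_mul (g := A ∘ p) (φ := k)
    (le_add_of_nonneg_right hδ.le) (hk.mono (Icc_subset_Icc ht htR)) fun c z htc hcz hz => by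
      have hLip := hA (p z) (p c) z (hp_norm z (htc.trans hcz.le))
        ((hp_norm c htc).trans hcz.le) (ht.trans_lt (htc.trans_lt hcz)) (hz.trans htR)
      rwa [← dist_eq_norm (p z), hp_dist, abs_of_pos (sub_pos.2 hcz)] at hLip
  simpa only [comp_apply, hp_start, hp_end] using hbound

theorem norm_sub_le_majorant_sub (hA : VariableLipschitzOn A x₀ R k)
    (hk : ContinuousOn k (Icc 0 R)) (hk₀ : ∀ t ∈ Icc 0 R, 0 ≤ k t) (a : ℝ) {u v : X}
    {t ρ : ℝ} (ht : 0 ≤ t) (hv : ‖v - x₀‖ ≤ t) (htρ : t + ‖u - v‖ ≤ ρ) (hρR : ρ ≤ R) :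
    ‖A u - A v‖ ≤ majorant a k ρ - majorant a k t := by
  have hnorm := norm_nonneg (u - v)
  have hmem : t + ‖u - v‖ ∈ Icc 0 R := ⟨by linarith, htρ.trans hρR⟩
  calc ‖A u - A v‖ ≤ ∫ s in t..t + ‖u - v‖, k s := hA.norm_sub_le_integral hk ht hv hmem.2
    _ = majorant a k (t + ‖u - v‖) - majorant a k t :=
      (majorant_sub_majorant hk ⟨ht, by linarith⟩ hmem).symm
    _ ≤ majorant a k ρ - majorant a k t := by
      gcongr
      exact monotoneOn_majorant hk hk₀ hmem ⟨hmem.1.trans htρ, hρR⟩ htρ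

theorem norm_apply_sub_le_majorant {A : X → X} (hA : VariableLipschitzOn A x₀ R k)
    (hk : ContinuousOn k (Icc 0 R)) (hk₀ : ∀ t ∈ Icc 0 R, 0 ≤ k t) {y : X} {ρ : ℝ}
    (hy : ‖y - x₀‖ ≤ ρ) (hρR : ρ ≤ R) : ‖A y - x₀‖ ≤ majorant ‖A x₀ - x₀‖ k ρ := by
  have hstep := hA.norm_sub_le_majorant_sub (v := x₀) hk hk₀ ‖A x₀ - x₀‖ le_rfl (by simp)
    (by simpa using hy) hρR
  calc ‖A y - x₀‖ ≤ ‖A y - A x₀‖ + ‖A x₀ - x₀‖ := norm_sub_le_norm_sub_add_norm_sub _ _ _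
    _ ≤ majorant ‖A x₀ - x₀‖ k ρ := by rw [majorant_zero] at hstep; linarith

theorem norm_iterate_sub_le {A : X → X} (hA : VariableLipschitzOn A x₀ R k)
    (hk : ContinuousOn k (Icc 0 R)) (hk₀ : ∀ t ∈ Icc 0 R, 0 ≤ k t) {p : ℝ} (hp : p ∈ Icc 0 R)
    (hfix : majorant ‖A x₀ - x₀‖ k p = p) {y : X} (hy : IsFixedPt A y)
    (hyp : ‖y - x₀‖ ≤ p) (n : ℕ) :
    ‖A^[n] x₀ - x₀‖ ≤ (majorant ‖A x₀ - x₀‖ k)^[n] 0 ∧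
      ‖y - A^[n] x₀‖ ≤ p - (majorant ‖A x₀ - x₀‖ k)^[n] 0 := by
  have hτ : ∀ n, (majorant ‖A x₀ - x₀‖ k)^[n] 0 ∈ Icc 0 p :=
    ((monotoneOn_majorant hk hk₀).mono (Icc_subset_Icc_right hp.2)).iterate_mem_Icc
      (by simp) hfix.le hp.1
  induction n with
  | zero => simpa using hyp
  | succ n ih =>
    obtain ⟨ih₁, ih₂⟩ := ih
    rw [iterate_succ_apply', iterate_succ_apply']
    refine ⟨hA.norm_apply_sub_le_majorant hk hk₀ ih₁ ((hτ n).2.trans hp.2), ?_⟩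
    conv_lhs => rw [← hy.eq]
    conv_rhs => rw [← hfix]
    exact hA.norm_sub_le_majorant_sub hk hk₀ _ (hτ n).1 ih₁ (by linarith) hp.2

theorem tendsto_iterate_of_isFixedPt {A : X → X} (hA : VariableLipschitzOn A x₀ R k)
    (hk : ContinuousOn k (Icc 0 R)) (hk₀ : ∀ t ∈ Icc 0 R, 0 ≤ k t) {p : ℝ} (hp : p ∈ Icc 0 R)
    (hfix : majorant ‖A x₀ - x₀‖ k p = p)
    (hleast : ∀ s ∈ Icc 0 p, majorant ‖A x₀ - x₀‖ k s = s → p ≤ s) {y : X}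
    (hy : IsFixedPt A y) (hyp : ‖y - x₀‖ ≤ p) : Tendsto (fun n => A^[n] x₀) atTop (𝓝 y) := by
  have hmono := (monotoneOn_majorant (a := ‖A x₀ - x₀‖) hk hk₀).mono (Icc_subset_Icc_right hp.2)
  have hτ := hmono.tendsto_iterate_least_fixedPt
    ((continuousOn_majorant hk).mono (Icc_subset_Icc_right hp.2)) (by simp) hfix hp.1 hleast
  have hgap : Tendsto (fun n => ‖y - A^[n] x₀‖) atTop (𝓝 0) :=
    squeeze_zero (fun _ => norm_nonneg _)
      (fun n => (hA.norm_iterate_sub_le hk hk₀ hp hfix hy hyp n).2)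
      (by simpa using hτ.const_sub p)
  rw [tendsto_iff_norm_sub_tendsto_zero]
  simpa only [norm_sub_rev] using hgap

end VariableLipschitzOn

end VariableLipschitz

theorem majorization_fixed_point_uniqueness_general
    {X : Type*} [NormedAddCommGroup X] [NormedSpace ℝ X]
    (x₀ : X) (R : ℝ) (A : X → X) (k : ℝ → ℝ)
    (hk_cont : ContinuousOn k (Set.Icc 0 R))
    (hk_nonneg : ∀ t ∈ Set.Icc (0 : ℝ) R, 0 ≤ k t)
    (hLip : ∀ x₁ x₂ : X, ∀ r : ℝ, ‖x₁ - x₀‖ ≤ r → ‖x₂ - x₀‖ ≤ r →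
      0 < r → r ≤ R → ‖A x₁ - A x₂‖ ≤ k r * ‖x₁ - x₂‖)
    (a : ℝ) (ha : a = ‖A x₀ - x₀‖)
    (aplus : ℝ → ℝ) (haplus : ∀ r : ℝ, aplus r = a + ∫ t in (0 : ℝ)..r, k t)
    (rstar : ℝ) (hrstar_mem : rstar ∈ Set.Icc (0 : ℝ) R)
    (hrstar_fix : aplus rstar = rstar)
    (hrstar_min : ∀ s ∈ Set.Icc (0 : ℝ) R, aplus s = s → rstar ≤ s)
    (x : ℕ → X) (hx0 : x 0 = x₀) (hx_succ : ∀ n : ℕ, x (n + 1) = A (x n))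
    (xstar : X) (hxstar_lim : Filter.Tendsto x Filter.atTop (nhds xstar))
    (r : ℝ) (hrR : r ≤ R)
    (hr_lt : ∀ s : ℝ, rstar < s → s ≤ r → aplus s < s) :
    ∀ xbar : X, A xbar = xbar → ‖xbar - x₀‖ ≤ r → xbar = xstar := by
  intro xbar hbar_fix hbar_norm
  have hA : VariableLipschitzOn A x₀ R k := hLip
  obtain rfl : aplus = majorant ‖A x₀ - x₀‖ k := funext fun s => by rw [haplus, ha, majorant]
  obtain rfl : x = fun n => A^[n] x₀ := funext fun n => by
    induction n with
    | zero => exact hx0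
    | succ n ih => rw [hx_succ, ih, iterate_succ_apply']
  have hbar_rstar : ‖xbar - x₀‖ ≤ rstar := by
    by_contra! hgt
    have hle := hA.norm_apply_sub_le_majorant hk_cont hk_nonneg le_rfl (hbar_norm.trans hrR)
    rw [hbar_fix] at hle
    exact (hr_lt _ hgt hbar_norm).not_ge hle
  exact tendsto_nhds_unique
    (hA.tendsto_iterate_of_isFixedPt hk_cont hk_nonneg hrstar_mem hrstar_fix
      (fun s hs => hrstar_min s ⟨hs.1, hs.2.trans hrstar_mem.2⟩) hbar_fix hbar_rstar)
    hxstar_lim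

/-- Uniqueness part of the majorization fixed point principle: if `r ∈ [r*, R]`
is such that `a₊(s) < s` for all `s ∈ (r*, r]`, then the fixed point `x*`
(obtained as the limit of the successive approximations from `x₀`) is the
unique fixed point of `A` in the ball `B[x₀,r]`. -/
theorem majorization_fixed_point_uniqueness
    {X : Type*} [NormedAddCommGroup X] [NormedSpace ℝ X] [CompleteSpace X]
    (x₀ : X) (R : ℝ) (hR : 0 < R) (A : X → X) (k : ℝ → ℝ)
    (hk_cont : ContinuousOn k (Set.Icc 0 R))
    (hk_nonneg : ∀ t ∈ Set.Icc (0 : ℝ) R, 0 ≤ k t)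
    (hLip : ∀ x₁ x₂ : X, ∀ r : ℝ, ‖x₁ - x₀‖ ≤ r → ‖x₂ - x₀‖ ≤ r →
      0 < r → r ≤ R → ‖A x₁ - A x₂‖ ≤ k r * ‖x₁ - x₂‖)
    (a : ℝ) (ha : a = ‖A x₀ - x₀‖)
    (aplus : ℝ → ℝ) (haplus : ∀ r : ℝ, aplus r = a + ∫ t in (0 : ℝ)..r, k t)
    (rstar : ℝ) (hrstar_mem : rstar ∈ Set.Icc (0 : ℝ) R)
    (hrstar_fix : aplus rstar = rstar)
    (hrstar_min : ∀ s ∈ Set.Icc (0 : ℝ) R, aplus s = s → rstar ≤ s)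
    (x : ℕ → X) (hx0 : x 0 = x₀) (hx_succ : ∀ n : ℕ, x (n + 1) = A (x n))
    (xstar : X) (hxstar_lim : Filter.Tendsto x Filter.atTop (nhds xstar))
    (hxstar_fix : A xstar = xstar) (hxstar_norm : ‖xstar - x₀‖ ≤ rstar)
    (r : ℝ) (hr_mem : rstar ≤ r) (hrR : r ≤ R)
    (hr_lt : ∀ s : ℝ, rstar < s → s ≤ r → aplus s < s) :
    ∀ xbar : X, A xbar = xbar → ‖xbar - x₀‖ ≤ r → xbar = xstar :=
  majorization_fixed_point_uniqueness_general x₀ R A k hk_cont hk_nonneg hLip a ha aplus haplus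
    rstar hrstar_mem hrstar_fix hrstar_min x hx0 hx_succ xstar hxstar_lim r hrR hr_lt
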